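/- arXiv:1703.08262 — 2 statements merged into one kernel-verified Lean document; each statement's English description precedes it below -/
import Mathlib

section
/- In a DTMC where every state satisfying ¬φ₁ ∨ φ₂ is made absorbing (self-loop with probability 1, other outgoing probabilities 0), the probability of satisfying φ₁ U^{≤k} φ₂ from the initial state equals the probability that the state at time k satisfies φ₂. -/
open Classical Finset
set_option maxHeartbeats 1000000

section Aux
variable {S : Type*} [Fintype S]

open Classical in
noncomputable def fA (T : S → S → ℝ) (φ₁ φ₂ : S → Prop) : ℕ → S → ℝ
  | 0, s => if φ₂ s then 1 else 0
  | n+1, s => if φ₂ s then 1 else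
      if φ₁ s then ∑ s' : S, T s s' * fA T φ₁ φ₂ n s' else 0

lemma fA_of_phi2 {T : S → S → ℝ} {φ₁ φ₂ : S → Prop} {s : S} (h : φ₂ s) :
    ∀ n, fA T φ₁ φ₂ n s = 1
  | 0 => by simp [fA, h]
  | n+1 => by simp [fA, h]

lemma fA_of_neither {T : S → S → ℝ} {φ₁ φ₂ : S → Prop} {s : S} (h1 : ¬ φ₁ s) (h2 : ¬ φ₂ s) :
    ∀ n, fA T φ₁ φ₂ n s = 0
  | 0 => by simp [fA, h2]
  | n+1 => by simp [fA, h1, h2]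

lemma ite_congr2 {p q : Prop} {hp : Decidable p} {hq : Decidable q} {x u y v : ℝ}
    (hpq : p ↔ q) (hx : x = u) (hy : y = v) : @ite ℝ p hp x y = @ite ℝ q hq u v := by
  subst hx; subst hy
  cases hp with
  | isTrue h =>
    cases hq with
    | isTrue h' => rfl
    | isFalse h' => exact absurd (hpq.mp h) h'
  | isFalse h =>
    cases hq with
    | isTrue h' => exact absurd (hpq.mpr h') h
    | isFalse h' => rfl

lemma sumConsAux (n : ℕ) (F : (Fin (n+1) → S) → ℝ) :
    ∑ st : Fin (n+1) → S, F st = ∑ a : S, ∑ t : Fin n → S, F (Fin.cons a t) := by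
  rw [← Equiv.sum_comp (Fin.consEquiv fun _ => S) F, Fintype.sum_prod_type]
  rfl

lemma prodConsAux (W : S → S → ℝ) (n : ℕ) (a : S) (t : Fin (n+1) → S) :
    ∏ i : Fin (n+1), W ((Fin.cons a t : Fin (n+2) → S) i.castSucc)
        ((Fin.cons a t : Fin (n+2) → S) i.succ)
      = W a (t 0) * ∏ i : Fin n, W (t i.castSucc) (t i.succ) := by
  rw [Fin.prod_univ_succ]
  have h0 : W ((Fin.cons a t : Fin (n+2) → S) (0 : Fin (n+1)).castSucc)
      ((Fin.cons a t : Fin (n+2) → S) (0 : Fin (n+1)).succ) = W a (t 0) := by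
    simp
  rw [h0]
  exact congrArg (fun x => W a (t 0) * x) (Finset.prod_congr rfl fun i _ => by
    rw [← Fin.succ_castSucc, Fin.cons_succ, Fin.cons_succ])

lemma collapse_head (s : S) {β : Type*} [Fintype β] (G : S → β → ℝ) :
    (∑ a : S, ∑ t : β, if a = s then G a t else 0) = ∑ t : β, G s t := by
  have h : ∀ a : S, (∑ t : β, if a = s then G a t else 0)
      = if a = s then ∑ t : β, G a t else 0 := fun a => by split <;> simp
  simp_rw [h]
  rw [Finset.sum_ite_eq' Finset.univ s fun a => ∑ t : β, G a t]
  simp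

lemma sum_head_split (T : S → S → ℝ) (s : S) (n : ℕ)
    (P : (Fin (n+1) → S) → ℝ) (Q : (Fin (n+1) → S) → Prop) :
    (∑ t : Fin (n+1) → S, if Q t then T s (t 0) * P t else 0)
      = ∑ s' : S, T s s' * ∑ t : Fin (n+1) → S, if t 0 = s' ∧ Q t then P t else 0 := by
  have h : ∀ t : Fin (n+1) → S, (if Q t then T s (t 0) * P t else 0)
      = ∑ s' : S, if t 0 = s' ∧ Q t then T s s' * P t else 0 := by
    intro t
    by_cases hq : Q t
    · simp only [hq, and_true]
      rw [Finset.sum_ite_eq Finset.univ (t 0) fun s' => T s s' * P t]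
      simp
    · simp [hq]
  simp_rw [h]
  rw [Finset.sum_comm]
  refine Finset.sum_congr rfl fun s' _ => ?_
  rw [Finset.mul_sum]
  refine Finset.sum_congr rfl fun t _ => ?_
  by_cases hc : t 0 = s' ∧ Q t <;> simp [hc]

lemma sum_head_split' (T : S → S → ℝ) (s : S) (n : ℕ)
    (P : (Fin (n+1) → S) → ℝ) :
    (∑ t : Fin (n+1) → S, T s (t 0) * P t)
      = ∑ s' : S, T s s' * ∑ t : Fin (n+1) → S, if t 0 = s' then P t else 0 := by
  have h : ∀ t : Fin (n+1) → S, T s (t 0) * P t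
      = ∑ s' : S, if t 0 = s' then T s s' * P t else 0 := by
    intro t
    rw [Finset.sum_ite_eq Finset.univ (t 0) fun s' => T s s' * P t]
    simp
  simp_rw [h]
  rw [Finset.sum_comm]
  refine Finset.sum_congr rfl fun s' _ => ?_
  rw [Finset.mul_sum]
  refine Finset.sum_congr rfl fun t _ => ?_
  by_cases hc : t 0 = s' <;> simp [hc]

lemma sum_paths_one (T : S → S → ℝ) (hT : ∀ s, ∑ s' : S, T s s' = 1) :
    ∀ (n : ℕ) (s : S),
      (∑ st : Fin (n+1) → S,
        if st 0 = s then ∏ i : Fin n, T (st i.castSucc) (st i.succ) else 0) = 1 := by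
  intro n
  induction n with
  | zero =>
    intro s
    rw [sumConsAux]
    simp
  | succ n ih =>
    intro s
    rw [sumConsAux]
    simp only [prodConsAux, Fin.cons_zero]
    rw [collapse_head s]
    refine (sum_head_split' T s n
      (fun t => ∏ i : Fin n, T (t i.castSucc) (t i.succ))).trans ?_
    refine (Finset.sum_congr rfl fun s' _ =>
      (congrArg (fun x => T s s' * x) (ih s')).trans (mul_one _)).trans (hT s)

lemma rhs_eq (T Tstar : S → S → ℝ) (φ₁ φ₂ : S → Prop)
    (hTstar : ∀ s s', Tstar s s' =
      if ¬ φ₁ s ∨ φ₂ s then (if s' = s then 1 else 0) else T s s') :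
    ∀ (n : ℕ) (s : S),
      (∑ st : Fin (n+1) → S,
        if st 0 = s ∧ φ₂ (st (Fin.last n)) then
          ∏ i : Fin n, Tstar (st i.castSucc) (st i.succ) else 0)
        = fA T φ₁ φ₂ n s := by
  intro n
  induction n with
  | zero =>
    intro s
    rw [sumConsAux]
    simp [fA, ite_and]
  | succ n ih =>
    intro s
    rw [sumConsAux]
    simp only [prodConsAux]
    simp only [Fin.cons_zero, ← Fin.succ_last, Fin.cons_succ, ite_and]
    rw [collapse_head s]
    by_cases habs : ¬ φ₁ s ∨ φ₂ s
    · have e : (∑ t : Fin (n+1) → S, if φ₂ (t (Fin.last n)) then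
          Tstar s (t 0) * ∏ i : Fin n, Tstar (t i.castSucc) (t i.succ) else 0)
          = ∑ t : Fin (n+1) → S, if t 0 = s ∧ φ₂ (t (Fin.last n)) then
              ∏ i : Fin n, Tstar (t i.castSucc) (t i.succ) else 0 := by
        refine Finset.sum_congr rfl fun t _ => ?_
        rw [hTstar]
        by_cases h1 : t 0 = s <;> by_cases h2 : φ₂ (t (Fin.last n)) <;>
          simp [h1, h2, habs]
      rw [e, ih s]
      by_cases h2 : φ₂ s
      · rw [fA_of_phi2 h2, fA_of_phi2 h2]
      · have h1 : ¬ φ₁ s := habs.resolve_right h2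
        rw [fA_of_neither h1 h2, fA_of_neither h1 h2]
    · push_neg at habs
      have e : ∀ t : Fin (n+1) → S, Tstar s (t 0) = T s (t 0) := fun t => by
        rw [hTstar, if_neg (by push_neg; exact habs)]
      simp_rw [e]
      refine Eq.trans ?_ ((sum_head_split T s n
        (fun t => ∏ i : Fin n, Tstar (t i.castSucc) (t i.succ))
        (fun t => φ₂ (t (Fin.last n)))).trans ?_)
      · exact Finset.sum_congr rfl fun t _ => rfl
      · refine (Finset.sum_congr rfl fun s' _ =>
          congrArg (fun x => T s s' * x) (ih s')).trans ?_
        simp [fA, habs.1, habs.2]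

lemma lhs_eq (T : S → S → ℝ) (φ₁ φ₂ : S → Prop)
    (hT : ∀ s, ∑ s' : S, T s s' = 1) :
    ∀ (n : ℕ) (s : S),
      (∑ st : Fin (n+1) → S,
        if st 0 = s ∧ ∃ i : Fin (n+1), φ₂ (st i) ∧ ∀ j < i, φ₁ (st j) then
          ∏ i : Fin n, T (st i.castSucc) (st i.succ) else 0)
        = fA T φ₁ φ₂ n s := by
  intro n
  induction n with
  | zero =>
    intro s
    rw [sumConsAux]
    have e : ∀ (a : S) (t : Fin 0 → S),
        ((∃ i : Fin 1, φ₂ ((Fin.cons a t : Fin 1 → S) i)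
            ∧ ∀ j < i, φ₁ ((Fin.cons a t : Fin 1 → S) j)) ↔ φ₂ a) := by
      intro a t
      constructor
      · rintro ⟨i, hi, -⟩
        have hi0 : i = 0 := Subsingleton.elim _ _
        rw [hi0] at hi
        simpa using hi
      · intro h
        exact ⟨0, by simpa using h, fun j hj => absurd hj (Fin.not_lt_zero j)⟩
    refine (Finset.sum_congr rfl fun a _ => Finset.sum_congr rfl fun t _ =>
      if_congr (and_congr (by rw [Fin.cons_zero]) (e a t)) (Fin.prod_univ_zero _) rfl).trans ?_
    simp only [ite_and]
    rw [collapse_head s fun a (_ : Fin 0 → S) => if φ₂ a then (1:ℝ) else 0]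
    simp [fA]
  | succ n ih =>
    intro s
    rw [sumConsAux]
    simp only [prodConsAux]
    simp only [Fin.cons_zero, ite_and]
    rw [collapse_head s]
    by_cases h2 : φ₂ s
    · have e : ∀ t : Fin (n+1) → S,
          (∃ i : Fin (n+2), φ₂ ((Fin.cons s t : Fin (n+2) → S) i)
            ∧ ∀ j < i, φ₁ ((Fin.cons s t : Fin (n+2) → S) j)) := fun t =>
        ⟨0, by simpa using h2, fun j hj => absurd hj (Fin.not_lt_zero j)⟩
      rw [fA_of_phi2 h2]
      refine (Finset.sum_congr rfl fun t _ => if_pos (e t)).trans ?_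
      refine (sum_head_split' T s n
        (fun t => ∏ i : Fin n, T (t i.castSucc) (t i.succ))).trans ?_
      refine (Finset.sum_congr rfl fun s' _ =>
        (congrArg (fun x => T s s' * x) (sum_paths_one T hT n s')).trans
          (mul_one _)).trans (hT s)
    · by_cases h1 : φ₁ s
      · have e : ∀ t : Fin (n+1) → S,
            ((∃ i : Fin (n+2), φ₂ ((Fin.cons s t : Fin (n+2) → S) i)
                ∧ ∀ j < i, φ₁ ((Fin.cons s t : Fin (n+2) → S) j))
              ↔ (∃ i : Fin (n+1), φ₂ (t i) ∧ ∀ j < i, φ₁ (t j))) := by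
          intro t
          constructor
          · rintro ⟨i, hi, hj⟩
            rcases Fin.eq_zero_or_eq_succ i with rfl | ⟨i', rfl⟩
            · exact absurd (by simpa using hi) h2
            · refine ⟨i', by simpa using hi, fun j hj' => ?_⟩
              have := hj j.succ (by simpa using hj')
              simpa using this
          · rintro ⟨i, hi, hj⟩
            refine ⟨i.succ, by simpa using hi, fun j hj' => ?_⟩
            rcases Fin.eq_zero_or_eq_succ j with rfl | ⟨j', rfl⟩
            · simpa using h1
            · have := hj j' (by simpa using hj')
              simpa using this
        refine Eq.trans ?_ ((sum_head_split T s n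
          (fun t => ∏ i : Fin n, T (t i.castSucc) (t i.succ))
          (fun t => ∃ i : Fin (n+2), φ₂ ((Fin.cons s t : Fin (n+2) → S) i)
            ∧ ∀ j < i, φ₁ ((Fin.cons s t : Fin (n+2) → S) j))).trans ?_)
        · exact Finset.sum_congr rfl fun t _ => ite_congr2 Iff.rfl rfl rfl
        · refine (Finset.sum_congr rfl fun s' _ => congrArg (fun x => T s s' * x)
            ((Finset.sum_congr rfl fun t _ =>
              ite_congr2 (and_congr Iff.rfl (e t)) rfl rfl).trans (ih s'))).trans ?_
          simp [fA, h1, h2]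
      · have e : ∀ t : Fin (n+1) → S,
            ¬ (∃ i : Fin (n+2), φ₂ ((Fin.cons s t : Fin (n+2) → S) i)
                ∧ ∀ j < i, φ₁ ((Fin.cons s t : Fin (n+2) → S) j)) := by
          intro t
          rintro ⟨i, hi, hj⟩
          rcases Fin.eq_zero_or_eq_succ i with rfl | ⟨i', rfl⟩
          · exact h2 (by simpa using hi)
          · exact h1 (by simpa using hj 0 (Fin.succ_pos i'))
        refine (Finset.sum_congr rfl fun t _ => if_neg (e t)).trans ?_
        simp [fA, h1, h2]

end Aux

open Classical in
theorem bounded_until_eq_absorbing_final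
    {S : Type*} [Fintype S]
    (T Tstar : S → S → ℝ) (φ₁ φ₂ : S → Prop) (sbar : S) (k : ℕ)
    (hT : ∀ s, ∑ s' : S, T s s' = 1)
    (hTstar : ∀ s s', Tstar s s' =
      if ¬ φ₁ s ∨ φ₂ s then (if s' = s then 1 else 0) else T s s') :
    (∑ st : Fin (k + 1) → S,
        if st 0 = sbar ∧ ∃ i : Fin (k + 1), φ₂ (st i) ∧ ∀ j < i, φ₁ (st j) then
          ∏ i : Fin k, T (st i.castSucc) (st i.succ)
        else 0)
      = ∑ st : Fin (k + 1) → S,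
          if st 0 = sbar ∧ φ₂ (st (Fin.last k)) then
            ∏ i : Fin k, Tstar (st i.castSucc) (st i.succ)
          else 0 := by
  exact (lhs_eq T φ₁ φ₂ hT k sbar).trans (rhs_eq T Tstar φ₁ φ₂ hTstar k sbar).symm
end

section
/- Let M be the product MDP of a POMDP and a za-DFA over horizon k, and suppose iteratively removing 'dark states' (k-step reachable states with no outgoing transitions) and all transitions into them terminates with no new dark states appearing. If the initial state is not itself dark in the final structure, then in the resulting pruned product every state reachable in at most k steps from the initial state has at least one outgoing transition; i.e., the corresponding supervisor is non-blocking over horizon k. -/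
/-- `x` is reachable from `v0` in at most `k` steps along the relation `E`. -/
def ReachableWithin {V : Type*} (E : V → V → Prop) (v0 : V) (k : ℕ) (x : V) : Prop :=
  ∃ n ≤ k, ∃ f : Fin (n + 1) → V, f 0 = v0 ∧ f (Fin.last n) = x ∧
    ∀ i : Fin n, E (f i.castSucc) (f i.succ)

/-- Suppose the pruning of a product MDP has reached a fixed point:
`D` is the set of dark states accumulated so far, the pruned transition relation `E'`
has no transitions into `D`, and no new dark states appear, i.e. every state that is
reachable in at most `k` steps (in the pruned structure) and has no outgoing pruned
transition already lies in `D`. If the initial state `v0` is not dark, then every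
state reachable within `k` steps from `v0` in the pruned product has an outgoing
transition — the corresponding supervisor is non-blocking over horizon `k`. -/
theorem pruned_product_nonblocking
    {V : Type*} [Fintype V]
    (E' : V → V → Prop) (D : Set V) (v0 : V) (k : ℕ)
    (hnoIn : ∀ x y, E' x y → y ∉ D)
    (hfix : ∀ x, ReachableWithin E' v0 k x → (¬ ∃ y, E' x y) → x ∈ D)
    (hv0 : v0 ∉ D) :
    ∀ x, ReachableWithin E' v0 k x → ∃ y, E' x y := by
  intro x hx
  by_contra hno
  have hxD : x ∈ D := hfix x hx hno
  obtain ⟨n, hn, f, hf0, hfl, hstep⟩ := hx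
  cases n with
  | zero =>
    have : x = v0 := by simpa [hf0] using hfl.symm
    exact hv0 (this ▸ hxD)
  | succ m =>
    have := hstep (Fin.last m)
    rw [Fin.succ_last, hfl] at this
    exact hnoIn _ _ this hxD
end
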